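/- The density δ(a,b,c) of the Rogers simplex R(a,b,c) is monotonically decreasing in each of the variables a, b, c for 1 < a < b < c. -/

import Mathlib

noncomputable section
open MeasureTheory

def pt3 (x y z : ℝ) : EuclideanSpace ℝ (Fin 3) := WithLp.toLp 2 ![x, y, z]

/-- The Rogers simplex R(a,b,c): the convex hull of 0, (a,0,0),
(a,√(b²−a²),0), and (a,√(b²−a²),√(c²−b²)). -/
def RogersSimplex (a b c : ℝ) : Set (EuclideanSpace ℝ (Fin 3)) :=
  convexHull ℝ {0, pt3 a 0 0, pt3 a (Real.sqrt (b^2 - a^2)) 0,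
    pt3 a (Real.sqrt (b^2 - a^2)) (Real.sqrt (c^2 - b^2))}

/-- The density of the Rogers simplex: the ratio of the volume of its
intersection with the unit ball at the origin to its volume. -/
def rogersDensity (a b c : ℝ) : ℝ :=
  (volume (RogersSimplex a b c ∩ Metric.closedBall (0 : EuclideanSpace ℝ (Fin 3)) 1)).toReal /
    (volume (RogersSimplex a b c)).toReal

/-!
The Rogers simplex `R(a,b,c)` is the image of the orthoscheme `O = {1 ≥ x ≥ y ≥ z ≥ 0}` under
the diagonal map `D = diag(a, √(b²-a²), √(c²-b²))` (`rogersMap a b c`). Since `D` scales all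
volumes by the same factor, `δ(a,b,c) = vol(O ∩ D⁻¹ B) / vol O`. On `O`, Abel summation gives
`‖D t‖² = a²(x² - y²) + b²(y² - z²) + c²z²` with nonnegative weights, so `‖D t‖` increases with
`a`, `b`, `c`, and `O ∩ D⁻¹ B` shrinks.
-/

theorem measureReal_image_inter_div_measureReal_image {E : Type*} [NormedAddCommGroup E]
    [NormedSpace ℝ E] [MeasurableSpace E] [BorelSpace E] [FiniteDimensional ℝ E]
    (μ : Measure E) [μ.IsAddHaarMeasure] {f : E →ₗ[ℝ] E} (hf : LinearMap.det f ≠ 0)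
    (s t : Set E) :
    μ.real (f '' s ∩ t) / μ.real (f '' s) = μ.real (s ∩ f ⁻¹' t) / μ.real s := by
  have hpos : 0 < |LinearMap.det f| := abs_pos.2 hf
  simp only [measureReal_def]
  rw [← Set.image_inter_preimage, Measure.addHaar_image_linearMap,
    Measure.addHaar_image_linearMap, ENNReal.toReal_mul, ENNReal.toReal_mul,
    ENNReal.toReal_ofReal hpos.le, mul_div_mul_left _ _ hpos.ne']

namespace RogersSimplex

def orthoscheme : Set (EuclideanSpace ℝ (Fin 3)) :=
  convexHull ℝ {0, pt3 1 0 0, pt3 1 1 0, pt3 1 1 1}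

lemma orthoscheme_subset_setOf_le : orthoscheme ⊆ {t | 0 ≤ t 2 ∧ t 2 ≤ t 1 ∧ t 1 ≤ t 0} := by
  refine convexHull_min ?_ ?_
  · rintro x (rfl | rfl | rfl | rfl) <;> simp [pt3]
  · intro x ⟨hx₂, hx₂₁, hx₁₀⟩ y ⟨hy₂, hy₂₁, hy₁₀⟩ p q hp hq _
    simp only [Set.mem_ofPred_eq, PiLp.add_apply, PiLp.smul_apply, smul_eq_mul]
    exact ⟨by positivity, by gcongr, by gcongr⟩

lemma isCompact_orthoscheme : IsCompact orthoscheme :=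
  (Set.toFinite _).isCompact_convexHull ℝ

def rogersMap (a b c : ℝ) : EuclideanSpace ℝ (Fin 3) →ₗ[ℝ] EuclideanSpace ℝ (Fin 3) :=
  Matrix.toEuclideanLin (Matrix.diagonal ![a, Real.sqrt (b^2 - a^2), Real.sqrt (c^2 - b^2)])

lemma rogersMap_pt3 (a b c x y z : ℝ) :
    rogersMap a b c (pt3 x y z) =
      pt3 (a * x) (Real.sqrt (b^2 - a^2) * y) (Real.sqrt (c^2 - b^2) * z) := by
  ext i
  fin_cases i <;> simp [rogersMap, pt3, Matrix.toLpLin_apply, Matrix.mulVec_diagonal]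

lemma det_rogersMap (a b c : ℝ) :
    LinearMap.det (rogersMap a b c) = a * Real.sqrt (b^2 - a^2) * Real.sqrt (c^2 - b^2) := by
  rw [rogersMap, LinearMap.det_toLpLin, Matrix.det_diagonal, Fin.prod_univ_three]
  rfl

lemma image_rogersMap_orthoscheme (a b c : ℝ) :
    rogersMap a b c '' orthoscheme = RogersSimplex a b c := by
  simp [orthoscheme, RogersSimplex, LinearMap.image_convexHull, Set.image_insert_eq,
    rogersMap_pt3]

lemma norm_sq_rogersMap {a b c : ℝ} (ha : 0 ≤ a) (hab : a ≤ b) (hbc : b ≤ c)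
    (t : EuclideanSpace ℝ (Fin 3)) :
    ‖rogersMap a b c t‖ ^ 2 =
      a^2 * t 0 ^ 2 + (b^2 - a^2) * t 1 ^ 2 + (c^2 - b^2) * t 2 ^ 2 := by
  rw [EuclideanSpace.real_norm_sq_eq, Fin.sum_univ_three]
  simp only [rogersMap, Matrix.toLpLin_apply, Matrix.mulVec_diagonal, Matrix.cons_val_zero,
    Matrix.cons_val_one, Matrix.cons_val, mul_pow]
  rw [Real.sq_sqrt (by nlinarith), Real.sq_sqrt (by nlinarith)]

lemma norm_rogersMap_le_norm_rogersMap {a₁ b₁ c₁ a₂ b₂ c₂ : ℝ} (ha₂ : 0 ≤ a₂)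
    (hab₂ : a₂ ≤ b₂) (hbc₂ : b₂ ≤ c₂) (hab₁ : a₁ ≤ b₁) (hbc₁ : b₁ ≤ c₁) (ha : a₂ ≤ a₁)
    (hb : b₂ ≤ b₁) (hc : c₂ ≤ c₁) {t : EuclideanSpace ℝ (Fin 3)}
    (ht : 0 ≤ t 2 ∧ t 2 ≤ t 1 ∧ t 1 ≤ t 0) :
    ‖rogersMap a₂ b₂ c₂ t‖ ≤ ‖rogersMap a₁ b₁ c₁ t‖ := by
  obtain ⟨hz, hzy, hyx⟩ := ht
  rw [← sq_le_sq₀ (norm_nonneg _) (norm_nonneg _), norm_sq_rogersMap ha₂ hab₂ hbc₂,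
    norm_sq_rogersMap (ha₂.trans ha) hab₁ hbc₁]
  have hx : a₂ ^ 2 * (t 0 ^ 2 - t 1 ^ 2) ≤ a₁ ^ 2 * (t 0 ^ 2 - t 1 ^ 2) := by
    gcongr
    exact sub_nonneg.2 (pow_le_pow_left₀ (hz.trans hzy) hyx 2)
  have hy : b₂ ^ 2 * (t 1 ^ 2 - t 2 ^ 2) ≤ b₁ ^ 2 * (t 1 ^ 2 - t 2 ^ 2) := by
    gcongr
    · exact sub_nonneg.2 (pow_le_pow_left₀ hz hzy 2)
    · exact ha₂.trans hab₂
  have hz : c₂ ^ 2 * t 2 ^ 2 ≤ c₁ ^ 2 * t 2 ^ 2 := by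
    gcongr
    exact ha₂.trans (hab₂.trans hbc₂)
  linarith

lemma rogersDensity_eq {a b c : ℝ} (ha : 0 < a) (hab : a < b) (hbc : b < c) :
    rogersDensity a b c =
      volume.real (orthoscheme ∩ rogersMap a b c ⁻¹' Metric.closedBall 0 1) /
        volume.real orthoscheme := by
  have hdet : LinearMap.det (rogersMap a b c) ≠ 0 := by
    have := Real.sqrt_pos.2 (sub_pos.2 (pow_lt_pow_left₀ hab ha.le two_ne_zero))
    have := Real.sqrt_pos.2 (sub_pos.2 (pow_lt_pow_left₀ hbc (ha.trans hab).le two_ne_zero))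
    rw [det_rogersMap]
    positivity
  rw [← measureReal_image_inter_div_measureReal_image volume hdet,
    image_rogersMap_orthoscheme, rogersDensity, measureReal_def, measureReal_def]

end RogersSimplex

theorem rogersDensity_antitone_general
    (a1 b1 c1 a2 b2 c2 : ℝ)
    (h1b : a1 < b1) (h1c : b1 < c1)
    (h2a : 1 < a2) (h2b : a2 < b2) (h2c : b2 < c2)
    (ha : a2 ≤ a1) (hb : b2 ≤ b1) (hc : c2 ≤ c1) :
    rogersDensity a1 b1 c1 ≤ rogersDensity a2 b2 c2 := by
  open RogersSimplex in
  have ha2 : 0 < a2 := zero_lt_one.trans h2a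
  have hsub : orthoscheme ∩ rogersMap a1 b1 c1 ⁻¹' Metric.closedBall 0 1 ⊆
      orthoscheme ∩ rogersMap a2 b2 c2 ⁻¹' Metric.closedBall 0 1 := by
    rintro t ⟨ht, hball⟩
    refine ⟨ht, ?_⟩
    simp only [Set.mem_preimage, mem_closedBall_zero_iff] at hball ⊢
    exact (norm_rogersMap_le_norm_rogersMap ha2.le h2b.le h2c.le h1b.le h1c.le ha hb hc
      (orthoscheme_subset_setOf_le ht)).trans hball
  rw [rogersDensity_eq (ha2.trans_le ha) h1b h1c, rogersDensity_eq ha2 h2b h2c]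
  gcongr
  exact measure_ne_top_of_subset Set.inter_subset_left isCompact_orthoscheme.measure_lt_top.ne

/-- The density δ(a,b,c) of the Rogers simplex is monotonically decreasing in
each variable for 1 < a < b < c. -/
theorem rogersDensity_antitone
    (a1 b1 c1 a2 b2 c2 : ℝ)
    (h1a : 1 < a1) (h1b : a1 < b1) (h1c : b1 < c1)
    (h2a : 1 < a2) (h2b : a2 < b2) (h2c : b2 < c2)
    (ha : a2 ≤ a1) (hb : b2 ≤ b1) (hc : c2 ≤ c1) :
    rogersDensity a1 b1 c1 ≤ rogersDensity a2 b2 c2 :=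
  rogersDensity_antitone_general a1 b1 c1 a2 b2 c2 h1b h1c h2a h2b h2c ha hb hc
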